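/- arXiv:1801.07576 — 6 statements merged into one kernel-verified Lean document; each statement's English description precedes it below -/
import Mathlib

section
/- Let m, n, A be positive reals with m > 1, n > m - 1, n ≤ m, and A > ((m-1)/(n-m+1))^(1/n). Define φ(γ) = γ^m * (1 + A^n) / (1 + γ^n * A^n) and B = A * ((n * A^n)/((m-1)*(1 + A^n)))^(1/(n-m+1)). Then φ(γ) > γ for all γ in the half-open interval [A/B, 1). -/
/-!
For `γ > 0`, `φ γ > γ` says `f γ > 1` where `f x = (1 + Aⁿ) x^(m-1) - Aⁿ xⁿ`. Since `f 1 = 1`,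
it suffices that `f` is strictly decreasing on `[A/B, ∞)`, and `A/B` is exactly the critical point
of `f`, past which the derivative is negative because `n > m - 1`.
-/

open Set

theorem strictAntiOn_mul_rpow_sub_mul_rpow {p q α β : ℝ} (hp : 0 < p) (hpq : p < q)
    (hα : 0 < α) (hβ : 0 < β) :
    StrictAntiOn (fun x => α * x ^ p - β * x ^ q) (Ici ((p * α / (q * β)) ^ (q - p)⁻¹)) := by
  have hq : 0 < q := hp.trans hpq
  have hqp : 0 < q - p := sub_pos.mpr hpq
  -- `t` is the critical point: `α p t^(p-1) = β q t^(q-1)`.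
  set t := (p * α / (q * β)) ^ (q - p)⁻¹
  have hcrit : 0 < p * α / (q * β) := by positivity
  apply strictAntiOn_of_deriv_neg (convex_Ici t)
  · exact Continuous.continuousOn (by fun_prop (disch := positivity))
  · intro x hx
    rw [interior_Ici] at hx
    have hx0 : 0 < x := (by positivity : 0 < t).trans hx
    have hderiv : HasDerivAt (fun x => α * x ^ p - β * x ^ q)
        (α * (p * x ^ (p - 1)) - β * (q * x ^ (q - 1))) x :=
      ((Real.hasDerivAt_rpow_const (Or.inl hx0.ne')).const_mul α).sub
        ((Real.hasDerivAt_rpow_const (Or.inl hx0.ne')).const_mul β)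
    have hpow : p * α / (q * β) < x ^ (q - p) := by
      calc p * α / (q * β) = t ^ (q - p) := (Real.rpow_inv_rpow hcrit.le hqp.ne').symm
        _ < x ^ (q - p) := Real.rpow_lt_rpow (by positivity) hx hqp
    have hsplit : x ^ (q - 1) = x ^ (p - 1) * x ^ (q - p) := by
      rw [← Real.rpow_add hx0]; ring_nf
    have hgap : p * α < q * β * x ^ (q - p) := (div_lt_iff₀' (by positivity)).mp hpow
    rw [hderiv.deriv, hsplit]
    nlinarith [Real.rpow_pos_of_pos hx0 (p - 1)]

theorem stmt_2_general (m n A B : ℝ) (φ : ℝ → ℝ) (hA : 0 < A) (hm : 1 < m)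
    (hnm : n > m - 1)
    (hB : B = A * ((n * A ^ n) / ((m - 1) * (1 + A ^ n))) ^ (1 / (n - m + 1)))
    (hφ : ∀ γ : ℝ, φ γ = γ ^ m * (1 + A ^ n) / (1 + γ ^ n * A ^ n)) :
    ∀ γ : ℝ, A / B ≤ γ → γ < 1 → φ γ > γ := by
  intro γ hγ hγ1
  set C := A ^ n
  have hC : 0 < C := Real.rpow_pos_of_pos hA n
  have hm1 : 0 < m - 1 := sub_pos.mpr hm
  have hn : 0 < n := hm1.trans hnm
  have hcrit : A / B = ((m - 1) * (1 + C) / (n * C)) ^ (n - (m - 1))⁻¹ := by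
    rw [hB, div_mul_cancel_left₀ hA.ne', ← Real.inv_rpow (by positivity), inv_div, one_div]
    ring_nf
  have hanti := strictAntiOn_mul_rpow_sub_mul_rpow (α := 1 + C) hm1 hnm (by positivity) hC
  rw [← hcrit] at hanti
  have hγ0 : 0 < γ := (by rw [hcrit]; positivity : 0 < A / B).trans_le hγ
  have hgt := hanti (mem_Ici.mpr hγ) (mem_Ici.mpr (hγ.trans hγ1.le)) hγ1
  simp only [Real.one_rpow, mul_one] at hgt
  rw [hφ, gt_iff_lt, lt_div_iff₀ (by positivity),
    show γ ^ m = γ ^ (m - 1) * γ by rw [← Real.rpow_add_one hγ0.ne']; ring_nf]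
  nlinarith

theorem stmt_2 (m n A B : ℝ) (φ : ℝ → ℝ) (hA : 0 < A) (hm : 1 < m) (hn : 0 < n)
    (hnm : n > m - 1) (hnm' : n ≤ m)
    (hAbig : A > ((m - 1) / (n - m + 1)) ^ (1 / n))
    (hB : B = A * ((n * A ^ n) / ((m - 1) * (1 + A ^ n))) ^ (1 / (n - m + 1)))
    (hφ : ∀ γ : ℝ, φ γ = γ ^ m * (1 + A ^ n) / (1 + γ ^ n * A ^ n)) :
    ∀ γ : ℝ, A / B ≤ γ → γ < 1 → φ γ > γ :=
  stmt_2_general m n A B φ hA hm hnm hB hφ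
end

section
/- Let X be an ordered Banach space with a normal cone P with normal constant N, and let u_n, v_n, λ_n be sequences with u_0 ≤ u_n ≤ u_{n+k} ≤ v_n ≤ v_0 (in the cone order), u_n ≥ λ_n v_n with 0 ≤ λ_n ≤ 1 and λ_n → 1. Then both (u_n) and (v_n) converge to a common limit. -/
/-!
Write `x ≤ y` for `y - x ∈ P`. Since `u₀ ≤ vₙ ≤ v₀`, normality bounds `(vₙ)`; since
`0 ≤ vₙ - uₙ ≤ (1 - λₙ) vₙ`, it then gives `‖vₙ - uₙ‖ ≤ N |1 - λₙ| sup ‖vₖ‖ → 0`.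
For `n ≤ m` we have `0 ≤ uₘ - uₙ ≤ vₙ - uₙ`, so `(uₙ)` is Cauchy with a limit `L`,
and `vₙ = uₙ + (vₙ - uₙ) → L`.
-/

open Filter Topology

theorem sub_mem_of_le {G : Type*} [AddCommGroup G] {P : Set G}
    (hadd : ∀ x ∈ P, ∀ y ∈ P, x + y ∈ P) (h0 : (0 : G) ∈ P) {u : ℕ → G}
    (hu : ∀ n, u (n + 1) - u n ∈ P) {n m : ℕ} (hnm : n ≤ m) : u m - u n ∈ P := by
  induction m, hnm using Nat.le_induction with
  | base => simpa using h0
  | succ m _ ih => simpa using hadd _ (hu m) _ ih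

section NormalCone

variable {X : Type*} [NormedAddCommGroup X] {P : Set X} {N : ℝ}

theorem norm_le_of_sub_mem_of_sub_mem
    (hnormal : ∀ x y : X, x ∈ P → y - x ∈ P → ‖x‖ ≤ N * ‖y‖) {a b x : X}
    (hax : x - a ∈ P) (hxb : b - x ∈ P) : ‖x‖ ≤ ‖a‖ + N * ‖b - a‖ := by
  have hgap : ‖x - a‖ ≤ N * ‖b - a‖ := hnormal _ _ hax (by simpa using hxb)
  calc ‖x‖ = ‖a + (x - a)‖ := by rw [add_sub_cancel]
    _ ≤ ‖a‖ + ‖x - a‖ := norm_add_le _ _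
    _ ≤ ‖a‖ + N * ‖b - a‖ := by linarith

theorem norm_sub_le_of_smul_le [NormedSpace ℝ X]
    (hnormal : ∀ x y : X, x ∈ P → y - x ∈ P → ‖x‖ ≤ N * ‖y‖) {u v : X} {t : ℝ}
    (huv : v - u ∈ P) (htu : u - t • v ∈ P) : ‖v - u‖ ≤ N * ‖(1 - t) • v‖ := by
  refine hnormal _ _ huv ?_
  convert htu using 1
  rw [sub_smul, one_smul]
  abel

theorem tendsto_sub_nhds_zero_of_smul_le [NormedSpace ℝ X]
    (hnormal : ∀ x y : X, x ∈ P → y - x ∈ P → ‖x‖ ≤ N * ‖y‖) {u v : ℕ → X} {lam : ℕ → ℝ}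
    {M : ℝ} (hv : ∀ n, ‖v n‖ ≤ M) (huv : ∀ n, v n - u n ∈ P)
    (hlam : ∀ n, u n - lam n • v n ∈ P) (hlamlim : Tendsto lam atTop (𝓝 1)) :
    Tendsto (fun n => v n - u n) atTop (𝓝 0) := by
  have hsmul : Tendsto (fun n => (1 - lam n) • v n) atTop (𝓝 0) :=
    (by simpa using hlamlim.const_sub 1 : Tendsto (fun n => 1 - lam n) atTop (𝓝 0))
      |>.zero_smul_isBoundedUnder_le (isBoundedUnder_of ⟨M, hv⟩)
  refine squeeze_zero_norm (fun n => norm_sub_le_of_smul_le hnormal (huv n) (hlam n)) ?_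
  simpa using hsmul.norm.const_mul N

end NormalCone

theorem stmt_7_general {X : Type*} [NormedAddCommGroup X] [NormedSpace ℝ X] [CompleteSpace X]
    (P : Set X)
    (hadd : ∀ x ∈ P, ∀ y ∈ P, x + y ∈ P) (hpointed : P ∩ (-P) = {0})
    (N : ℝ)
    (hnormal : ∀ x y : X, x ∈ P → y - x ∈ P → ‖x‖ ≤ N * ‖y‖)
    (u v : ℕ → X) (lam : ℕ → ℝ)
    (hu : ∀ n, u (n + 1) - u n ∈ P)
    (hv : ∀ n, v n - v (n + 1) ∈ P)
    (huv : ∀ n, v n - u n ∈ P)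
    (hlam : ∀ n, u n - lam n • v n ∈ P)
    (hlamlim : Filter.Tendsto lam Filter.atTop (nhds 1)) :
    ∃ L : X, Filter.Tendsto u Filter.atTop (nhds L) ∧
      Filter.Tendsto v Filter.atTop (nhds L) := by
  have h0 : (0 : X) ∈ P := (hpointed.symm ▸ rfl : (0 : X) ∈ P ∩ -P).1
  have hu_le {n m : ℕ} (h : n ≤ m) : u m - u n ∈ P := sub_mem_of_le hadd h0 hu h
  have hv_le {n m : ℕ} (h : n ≤ m) : v n - v m ∈ P := by
    simpa only [neg_sub_neg] using sub_mem_of_le hadd h0 (u := fun n => -v n)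
      (fun n => by rw [neg_sub_neg]; exact hv n) h
  have hv_u {n m : ℕ} (h : n ≤ m) : v n - u m ∈ P := by
    simpa using hadd _ (hv_le h) _ (huv m)
  have hvbdd (n : ℕ) : ‖v n‖ ≤ ‖u 0‖ + N * ‖v 0 - u 0‖ :=
    norm_le_of_sub_mem_of_sub_mem hnormal
      (by simpa using hadd _ (huv n) _ (hu_le n.zero_le)) (hv_le n.zero_le)
  have hgap := tendsto_sub_nhds_zero_of_smul_le hnormal hvbdd huv hlam hlamlim
  have hcauchy : CauchySeq u := by
    refine cauchySeq_of_le_tendsto_0' (fun n => N * ‖v n - u n‖) (fun n m h => ?_)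
      (by simpa using hgap.norm.const_mul N)
    rw [dist_comm, dist_eq_norm]
    exact hnormal _ _ (hu_le h) (by simpa using hv_u h)
  obtain ⟨L, hL⟩ := cauchySeq_tendsto_of_complete hcauchy
  exact ⟨L, hL, by simpa using hL.add hgap⟩

/-- In a Banach space ordered by a normal cone `P`, monotone sequences `u ≤ v`
with `λ_n v_n ≤ u_n` and `λ_n → 1` converge to a common limit. -/
theorem stmt_7 {X : Type*} [NormedAddCommGroup X] [NormedSpace ℝ X] [CompleteSpace X]
    (P : Set X) (hclosed : IsClosed P) (hconv : Convex ℝ P)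
    (hadd : ∀ x ∈ P, ∀ y ∈ P, x + y ∈ P) (hpointed : P ∩ (-P) = {0})
    (N : ℝ) (hN : 0 < N)
    (hnormal : ∀ x y : X, x ∈ P → y - x ∈ P → ‖x‖ ≤ N * ‖y‖)
    (u v : ℕ → X) (lam : ℕ → ℝ)
    (hu0 : u 0 ∈ P)
    (hu : ∀ n, u (n + 1) - u n ∈ P)
    (hv : ∀ n, v n - v (n + 1) ∈ P)
    (huv : ∀ n, v n - u n ∈ P)
    (hlam : ∀ n, u n - lam n • v n ∈ P)
    (hlam0 : ∀ n, 0 ≤ lam n) (hlam1 : ∀ n, lam n ≤ 1)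
    (hlamlim : Filter.Tendsto lam Filter.atTop (nhds 1)) :
    ∃ L : X, Filter.Tendsto u Filter.atTop (nhds L) ∧
      Filter.Tendsto v Filter.atTop (nhds L) :=
  stmt_7_general P hadd hpointed N hnormal u v lam hu hv huv hlam hlamlim
end

section
/- Let P° be the set of almost periodic functions ℝ → ℝ with positive infimum, ordered pointwise, and let Φ : P° → P° satisfy: (I) there exist constants u_0 < v_0 in P° (positive constants) with u_0 ≤ Φ(u_0, v_0) and Φ(v_0, u_0) ≤ v_0; (II) Φ is mixed monotone on [u_0, v_0]×[u_0,v_0] (nondecreasing in the first argument, nonincreasing in the second); (III) there is φ : [inf u_0 / sup v_0, 1) → (0,∞) with φ(γ) > γ and Φ(γx, γ⁻¹y) ≥ φ(γ)Φ(x,y) for all x, y ∈ [u_0, v_0] and γ in that interval. Then Φ has exactly one fixed point x̃ (i.e., Φ(x̃, x̃) = x̃) in the order interval [u_0, v_0]. -/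
/-- Bohr almost periodicity of a real function. -/
def AlmostPeriodic (f : ℝ → ℝ) : Prop :=
  ∀ ε > 0, ∃ l > 0, ∀ a : ℝ, ∃ ξ ∈ Set.Icc a (a + l), ∀ t : ℝ, |f (t + ξ) - f t| < ε

/-- Membership in the interior of the nonnegative cone of `AP(ℝ)`:
almost periodic and bounded below by a positive constant. -/
def InPcirc (f : ℝ → ℝ) : Prop :=
  AlmostPeriodic f ∧ ∃ ε > 0, ∀ t : ℝ, ε ≤ f t

/-- Membership in the order interval `[u₀, v₀]` of constant functions `A ≤ B`. -/
def InInterval (A B : ℝ) (f : ℝ → ℝ) : Prop :=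
  AlmostPeriodic f ∧ ∀ t : ℝ, A ≤ f t ∧ f t ≤ B

/-!
Iterate `uₙ₊₁ = Φ(uₙ, vₙ)`, `vₙ₊₁ = Φ(vₙ, uₙ)` from `(u₀, v₀) = (A, B)`. Mixed monotonicity makes
`uₙ` increase and `vₙ` decrease, and every fixed point in `[A, B]` stays between them. If
`r vₙ ≤ uₙ` with `r = s c`, condition (III), applied once with `c` and once with `s` to
truncations of `vₙ` and `uₙ`, gives `φ(s) φ(c) vₙ₊₁ ≤ uₙ₊₁`. For the supremum `T < 1` of the
ratios `r` attained by some `n` this yields `T ≥ φ(s) φ(T) > s φ(T) > T` for `s < 1` close to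
`1`; so `T = 1`, without any continuity or monotonicity of `φ`. Hence `vₙ - uₙ → 0` uniformly,
the common limit is almost periodic as a uniform limit, and it is the unique fixed point.
-/

open Set

theorem AlmostPeriodic.const (c : ℝ) : AlmostPeriodic fun _ => c := fun _ hε =>
  ⟨1, one_pos, fun a => ⟨a, ⟨le_rfl, by linarith⟩, fun _ => by simpa using hε⟩⟩

theorem AlmostPeriodic.comp_lipschitzWith {f g : ℝ → ℝ} {K : NNReal} (hg : LipschitzWith K g)
    (hf : AlmostPeriodic f) : AlmostPeriodic fun t => g (f t) := by
  intro ε hε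
  obtain ⟨l, hl, hper⟩ := hf (ε / (K + 1)) (by positivity)
  refine ⟨l, hl, fun a => ?_⟩
  obtain ⟨ξ, hξ, hξε⟩ := hper a
  refine ⟨ξ, hξ, fun t => ?_⟩
  have hgt : |g (f (t + ξ)) - g (f t)| ≤ K * |f (t + ξ) - f t| := by
    simpa only [Real.dist_eq] using hg.dist_le_mul (f (t + ξ)) (f t)
  calc |g (f (t + ξ)) - g (f t)| ≤ (K + 1) * |f (t + ξ) - f t| := by
        nlinarith [abs_nonneg (f (t + ξ) - f t)]
    _ < (K + 1) * (ε / (K + 1)) := by gcongr; exact hξε t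
    _ = ε := by field_simp

theorem AlmostPeriodic.const_mul (c : ℝ) {f : ℝ → ℝ} (hf : AlmostPeriodic f) :
    AlmostPeriodic fun t => c * f t :=
  hf.comp_lipschitzWith (lipschitzWith_smul c)

theorem AlmostPeriodic.const_max (a : ℝ) {f : ℝ → ℝ} (hf : AlmostPeriodic f) :
    AlmostPeriodic fun t => max a (f t) :=
  hf.comp_lipschitzWith (LipschitzWith.id.const_max a)

theorem AlmostPeriodic.const_min (a : ℝ) {f : ℝ → ℝ} (hf : AlmostPeriodic f) :
    AlmostPeriodic fun t => min a (f t) :=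
  hf.comp_lipschitzWith (LipschitzWith.id.const_min a)

theorem AlmostPeriodic.of_forall_approx {f : ℝ → ℝ}
    (h : ∀ ε > 0, ∃ g, AlmostPeriodic g ∧ ∀ t, |f t - g t| < ε) : AlmostPeriodic f := by
  intro ε hε
  obtain ⟨g, hg, hfg⟩ := h (ε / 3) (by positivity)
  obtain ⟨l, hl, hper⟩ := hg (ε / 3) (by positivity)
  refine ⟨l, hl, fun a => ?_⟩
  obtain ⟨ξ, hξ, hξε⟩ := hper a
  refine ⟨ξ, hξ, fun t => ?_⟩
  have htri := dist_triangle4 (f (t + ξ)) (g (t + ξ)) (g t) (f t)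
  simp only [Real.dist_eq] at htri
  linarith [hfg (t + ξ), hfg t, hξε t, abs_sub_comm (g t) (f t)]

theorem exists_almostPeriodic_mem_Icc {u v : ℕ → ℝ → ℝ} (hu : ∀ n, AlmostPeriodic (u n))
    (huv : ∀ m n, u m ≤ v n) (hgap : ∀ ε > 0, ∃ n, ∀ t, v n t - u n t < ε) :
    ∃ x, AlmostPeriodic x ∧ ∀ n, x ∈ Icc (u n) (v n) := by
  have hbdd : ∀ t, BddAbove (range fun n => u n t) := fun t =>
    ⟨v 0 t, by rintro _ ⟨m, rfl⟩; exact huv m 0 t⟩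
  have hx : ∀ n, u n ≤ (fun t => ⨆ m, u m t) ∧ (fun t => ⨆ m, u m t) ≤ v n := fun n =>
    ⟨fun t => le_ciSup (hbdd t) n, fun t => ciSup_le fun m => huv m n t⟩
  refine ⟨_, AlmostPeriodic.of_forall_approx fun ε hε => ?_, hx⟩
  obtain ⟨n, hn⟩ := hgap ε hε
  refine ⟨u n, hu n, fun t => ?_⟩
  rw [abs_of_nonneg (sub_nonneg.mpr ((hx n).1 t))]
  linarith [(hx n).2 t, hn t]

theorem eq_of_mem_Icc_of_gap {ι : Type*} {u v : ι → ℝ → ℝ}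
    (hgap : ∀ ε > 0, ∃ i, ∀ t, v i t - u i t < ε) {x y : ℝ → ℝ}
    (hx : ∀ i, x ∈ Icc (u i) (v i)) (hy : ∀ i, y ∈ Icc (u i) (v i)) : x = y := by
  funext t
  refine eq_of_forall_dist_le fun ε hε => ?_
  obtain ⟨i, hi⟩ := hgap ε hε
  rw [Real.dist_eq, abs_le]
  constructor <;> linarith [(hx i).1 t, (hx i).2 t, (hy i).1 t, (hy i).2 t, hi t]

section Interval

variable {A B : ℝ} {x : ℝ → ℝ}

theorem InInterval.inPcirc (hA : 0 < A) (hx : InInterval A B x) : InPcirc x :=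
  ⟨hx.1, A, hA, fun t => (hx.2 t).1⟩

theorem inInterval_const {c : ℝ} (hAc : A ≤ c) (hcB : c ≤ B) : InInterval A B fun _ => c :=
  ⟨.const c, fun _ => ⟨hAc, hcB⟩⟩

theorem InInterval.const_max {a : ℝ} (hx : InInterval A B x) (hAa : A ≤ a) (haB : a ≤ B) :
    InInterval A B fun t => max a (x t) :=
  ⟨hx.1.const_max a, fun t => ⟨hAa.trans (le_max_left _ _), max_le haB (hx.2 t).2⟩⟩

theorem InInterval.const_min {a : ℝ} (hx : InInterval A B x) (hAa : A ≤ a) (haB : a ≤ B) :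
    InInterval A B fun t => min a (x t) :=
  ⟨hx.1.const_min a, fun t => ⟨le_min hAa (hx.2 t).1, (min_le_left _ _).trans haB⟩⟩

theorem InInterval.max_mul (hA : 0 ≤ A) {c : ℝ} (hc : c ≤ 1) (hx : InInterval A B x) :
    InInterval A B fun t => max A (c * x t) :=
  ⟨(hx.1.const_mul c).const_max A, fun t =>
    ⟨le_max_left _ _, max_le ((hx.2 t).1.trans (hx.2 t).2)
      (by nlinarith [(hx.2 t).1, (hx.2 t).2])⟩⟩

theorem InInterval.min_mul (hA : 0 ≤ A) {d : ℝ} (hd : 1 ≤ d) (hx : InInterval A B x) :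
    InInterval A B fun t => min B (d * x t) :=
  ⟨(hx.1.const_mul d).const_min B, fun t =>
    ⟨le_min ((hx.2 t).1.trans (hx.2 t).2) (by nlinarith [(hx.2 t).1, (hx.2 t).2]),
      min_le_left _ _⟩⟩

end Interval

/-- Hypotheses (I), (II) and `Φ(P°, P°) ⊆ P°`, with `u₀ = A`, `v₀ = B`. -/
structure MixedMonotoneSetup (Φ : (ℝ → ℝ) → (ℝ → ℝ) → (ℝ → ℝ)) (A B : ℝ) : Prop where
  pos : 0 < A
  le : A ≤ B
  mapsTo : ∀ x y, InPcirc x → InPcirc y → InPcirc (Φ x y)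
  lower : ∀ t, A ≤ Φ (fun _ => A) (fun _ => B) t
  upper : ∀ t, Φ (fun _ => B) (fun _ => A) t ≤ B
  mono : ∀ x x' y y', InInterval A B x → InInterval A B x' → InInterval A B y →
    InInterval A B y' → x ≤ x' → y' ≤ y → Φ x y ≤ Φ x' y'

/-- Hypothesis (III). -/
structure IsPhiConcave (Φ : (ℝ → ℝ) → (ℝ → ℝ) → (ℝ → ℝ)) (φ : ℝ → ℝ) (A B : ℝ) : Prop where
  lt_phi : ∀ γ, A / B ≤ γ → γ < 1 → φ γ > γ
  le_map : ∀ γ, A / B ≤ γ → γ < 1 → ∀ x y, InInterval A B x → InInterval A B y →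
    ∀ t, Φ (fun s => γ * x s) (fun s => γ⁻¹ * y s) t ≥ φ γ * Φ x y t

/-- The pairs `(uₙ, vₙ)`. -/
def mixedIter (Φ : (ℝ → ℝ) → (ℝ → ℝ) → (ℝ → ℝ)) (A B : ℝ) : ℕ → (ℝ → ℝ) × (ℝ → ℝ)
  | 0 => (fun _ => A, fun _ => B)
  | n + 1 => (Φ (mixedIter Φ A B n).1 (mixedIter Φ A B n).2,
      Φ (mixedIter Φ A B n).2 (mixedIter Φ A B n).1)

namespace MixedMonotoneSetup

variable {Φ : (ℝ → ℝ) → (ℝ → ℝ) → (ℝ → ℝ)} {A B : ℝ}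

theorem inInterval_map (h : MixedMonotoneSetup Φ A B) {x y : ℝ → ℝ} (hx : InInterval A B x)
    (hy : InInterval A B y) : InInterval A B (Φ x y) := by
  have hA := inInterval_const (le_refl A) h.le
  have hB := inInterval_const h.le (le_refl B)
  refine ⟨(h.mapsTo x y (hx.inPcirc h.pos) (hy.inPcirc h.pos)).1, fun t => ⟨?_, ?_⟩⟩
  · exact (h.lower t).trans
      (h.mono _ _ _ _ hA hx hB hy (fun s => (hx.2 s).1) (fun s => (hy.2 s).2) t)
  · exact (h.mono _ _ _ _ hx hB hy hA (fun s => (hx.2 s).2) (fun s => (hy.2 s).1) t).trans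
      (h.upper t)

theorem inInterval_mixedIter (h : MixedMonotoneSetup Φ A B) (n : ℕ) :
    InInterval A B (mixedIter Φ A B n).1 ∧ InInterval A B (mixedIter Φ A B n).2 := by
  induction n with
  | zero => exact ⟨inInterval_const le_rfl h.le, inInterval_const h.le le_rfl⟩
  | succ n ih => exact ⟨h.inInterval_map ih.1 ih.2, h.inInterval_map ih.2 ih.1⟩

theorem fst_succ_le (h : MixedMonotoneSetup Φ A B) {n : ℕ} {x y : ℝ → ℝ} (hx : InInterval A B x)
    (hy : InInterval A B y) (hux : (mixedIter Φ A B n).1 ≤ x) (hyv : y ≤ (mixedIter Φ A B n).2) :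
    (mixedIter Φ A B (n + 1)).1 ≤ Φ x y :=
  h.mono _ _ _ _ (h.inInterval_mixedIter n).1 hx (h.inInterval_mixedIter n).2 hy hux hyv

theorem le_snd_succ (h : MixedMonotoneSetup Φ A B) {n : ℕ} {x y : ℝ → ℝ} (hx : InInterval A B x)
    (hy : InInterval A B y) (hxv : x ≤ (mixedIter Φ A B n).2) (huy : (mixedIter Φ A B n).1 ≤ y) :
    Φ x y ≤ (mixedIter Φ A B (n + 1)).2 :=
  h.mono _ _ _ _ hx (h.inInterval_mixedIter n).2 hy (h.inInterval_mixedIter n).1 hxv huy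

theorem fst_le_fst_succ_and_snd_succ_le_snd (h : MixedMonotoneSetup Φ A B) (n : ℕ) :
    (mixedIter Φ A B n).1 ≤ (mixedIter Φ A B (n + 1)).1 ∧
      (mixedIter Φ A B (n + 1)).2 ≤ (mixedIter Φ A B n).2 := by
  induction n with
  | zero =>
    have h1 := h.inInterval_mixedIter 1
    exact ⟨fun t => (h1.1.2 t).1, fun t => (h1.2.2 t).2⟩
  | succ n ih =>
    have h1 := h.inInterval_mixedIter (n + 1)
    exact ⟨h.fst_succ_le h1.1 h1.2 ih.1 ih.2, h.le_snd_succ h1.2 h1.1 ih.2 ih.1⟩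

theorem monotone_fst (h : MixedMonotoneSetup Φ A B) : Monotone fun n => (mixedIter Φ A B n).1 :=
  monotone_nat_of_le_succ fun n => (h.fst_le_fst_succ_and_snd_succ_le_snd n).1

theorem antitone_snd (h : MixedMonotoneSetup Φ A B) : Antitone fun n => (mixedIter Φ A B n).2 :=
  antitone_nat_of_succ_le fun n => (h.fst_le_fst_succ_and_snd_succ_le_snd n).2

theorem fst_le_snd_self (h : MixedMonotoneSetup Φ A B) (n : ℕ) :
    (mixedIter Φ A B n).1 ≤ (mixedIter Φ A B n).2 := by
  induction n with
  | zero => exact fun _ => h.le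
  | succ n ih =>
    have hn := h.inInterval_mixedIter n
    exact h.mono _ _ _ _ hn.1 hn.2 hn.2 hn.1 ih ih

theorem fst_le_snd (h : MixedMonotoneSetup Φ A B) (m n : ℕ) :
    (mixedIter Φ A B m).1 ≤ (mixedIter Φ A B n).2 :=
  calc (mixedIter Φ A B m).1 ≤ (mixedIter Φ A B (max m n)).1 := h.monotone_fst (le_max_left m n)
    _ ≤ (mixedIter Φ A B (max m n)).2 := h.fst_le_snd_self _
    _ ≤ (mixedIter Φ A B n).2 := h.antitone_snd (le_max_right m n)

theorem mem_Icc_of_map_eq (h : MixedMonotoneSetup Φ A B) {z : ℝ → ℝ} (hz : InInterval A B z)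
    (hfix : Φ z z = z) (n : ℕ) : z ∈ Icc (mixedIter Φ A B n).1 (mixedIter Φ A B n).2 := by
  induction n with
  | zero => exact ⟨fun t => (hz.2 t).1, fun t => (hz.2 t).2⟩
  | succ n ih => exact hfix ▸ ⟨h.fst_succ_le hz hz ih.1 ih.2, h.le_snd_succ hz hz ih.2 ih.1⟩

theorem map_mem_Icc (h : MixedMonotoneSetup Φ A B) {x : ℝ → ℝ} (hx : InInterval A B x)
    (hmem : ∀ n, x ∈ Icc (mixedIter Φ A B n).1 (mixedIter Φ A B n).2) (n : ℕ) :
    Φ x x ∈ Icc (mixedIter Φ A B n).1 (mixedIter Φ A B n).2 :=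
  ⟨(h.monotone_fst n.le_succ).trans (h.fst_succ_le hx hx (hmem n).1 (hmem n).2),
    (h.le_snd_succ hx hx (hmem n).2 (hmem n).1).trans (h.antitone_snd n.le_succ)⟩

theorem exists_mem_Icc (h : MixedMonotoneSetup Φ A B)
    (hgap : ∀ ε > 0, ∃ n, ∀ t, (mixedIter Φ A B n).2 t - (mixedIter Φ A B n).1 t < ε) :
    ∃ x, InInterval A B x ∧ ∀ n, x ∈ Icc (mixedIter Φ A B n).1 (mixedIter Φ A B n).2 := by
  obtain ⟨x, hx, hmem⟩ := exists_almostPeriodic_mem_Icc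
    (fun n => (h.inInterval_mixedIter n).1.1) h.fst_le_snd hgap
  exact ⟨x, ⟨hx, fun t => ⟨(hmem 0).1 t, (hmem 0).2 t⟩⟩, hmem⟩

end MixedMonotoneSetup

namespace IsPhiConcave

variable {Φ : (ℝ → ℝ) → (ℝ → ℝ) → (ℝ → ℝ)} {φ : ℝ → ℝ} {A B : ℝ}

theorem mul_le_map (hφ : IsPhiConcave Φ φ A B) (h : MixedMonotoneSetup Φ A B) {c : ℝ}
    (hc : A / B ≤ c) (hc1 : c < 1) {x y x' y' : ℝ → ℝ} (hx : InInterval A B x)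
    (hy : InInterval A B y) (hx' : InInterval A B x') (hy' : InInterval A B y')
    (hxx' : ∀ t, c * x t ≤ x' t) (hyy' : ∀ t, y' t ≤ c⁻¹ * y t) (t : ℝ) :
    φ c * Φ x y t ≤ Φ x' y' t := by
  have hB : 0 < B := h.pos.trans_le h.le
  have hc0 : 0 < c := (div_pos h.pos hB).trans_le hc
  have hAc : A ≤ c * B := by rwa [div_le_iff₀ hB] at hc
  -- (III) applies to the truncations `X`, `Y`, whose scalings are again truncations
  set X : ℝ → ℝ := fun s => max (A / c) (x s)
  set Y : ℝ → ℝ := fun s => min (c * B) (y s)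
  have hX : InInterval A B X := hx.const_max
    ((le_div_iff₀ hc0).mpr (by nlinarith [h.pos])) ((div_le_iff₀ hc0).mpr (by linarith))
  have hY : InInterval A B Y := hy.const_min hAc (by nlinarith)
  have hcX : (fun s => c * X s) = fun s => max A (c * x s) := funext fun s => by
    rw [mul_max_of_nonneg _ _ hc0.le, mul_div_cancel₀ _ hc0.ne']
  have hcY : (fun s => c⁻¹ * Y s) = fun s => min B (c⁻¹ * y s) := funext fun s => by
    rw [mul_min_of_nonneg _ _ (inv_nonneg.mpr hc0.le), inv_mul_cancel_left₀ hc0.ne']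
  have hc1' : 1 ≤ c⁻¹ := one_le_inv₀ hc0 |>.mpr hc1.le
  calc φ c * Φ x y t ≤ φ c * Φ X Y t :=
        mul_le_mul_of_nonneg_left (h.mono _ _ _ _ hx hX hy hY (fun s => le_max_right _ _)
          (fun s => min_le_right _ _) t) (hc0.trans (hφ.lt_phi c hc hc1)).le
    _ ≤ Φ (fun s => c * X s) (fun s => c⁻¹ * Y s) t := hφ.le_map c hc hc1 X Y hX hY t
    _ = Φ (fun s => max A (c * x s)) (fun s => min B (c⁻¹ * y s)) t := by rw [hcX, hcY]
    _ ≤ Φ x' y' t :=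
        h.mono _ _ _ _ (hx.max_mul h.pos.le hc1.le) hx' (hy.min_mul h.pos.le hc1') hy'
          (fun s => max_le (hx'.2 s).1 (hxx' s)) (fun s => le_min (hy'.2 s).2 (hyy' s)) t

theorem mul_mul_le_mixedIter_succ (hφ : IsPhiConcave Φ φ A B) (h : MixedMonotoneSetup Φ A B)
    {s c : ℝ} (hs : A / B ≤ s) (hs1 : s < 1) (hc : A / B ≤ c) (hc1 : c < 1) {n : ℕ}
    (hn : ∀ t, s * c * (mixedIter Φ A B n).2 t ≤ (mixedIter Φ A B n).1 t) (t : ℝ) :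
    φ s * φ c * (mixedIter Φ A B (n + 1)).2 t ≤ (mixedIter Φ A B (n + 1)).1 t := by
  obtain ⟨hu, hv⟩ := h.inInterval_mixedIter n
  have hB : 0 < B := h.pos.trans_le h.le
  have hs0 : 0 < s := (div_pos h.pos hB).trans_le hs
  have hc0 : 0 < c := (div_pos h.pos hB).trans_le hc
  have hX := hv.max_mul h.pos.le hc1.le
  have hY := hu.min_mul h.pos.le (one_le_inv₀ hc0 |>.mpr hc1.le)
  have hcv : φ c * Φ (mixedIter Φ A B n).2 (mixedIter Φ A B n).1 t ≤
      Φ (fun z => max A (c * (mixedIter Φ A B n).2 z))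
        (fun z => min B (c⁻¹ * (mixedIter Φ A B n).1 z)) t :=
    hφ.mul_le_map h hc hc1 hv hu hX hY (fun _ => le_max_right _ _) (fun _ => min_le_right _ _) t
  have hsX : ∀ t, s * max A (c * (mixedIter Φ A B n).2 t) ≤ (mixedIter Φ A B n).1 t := fun t => by
    rw [mul_max_of_nonneg _ _ hs0.le, ← mul_assoc]
    exact max_le (by nlinarith [(hu.2 t).1, h.pos]) (hn t)
  have hsY : ∀ t, (mixedIter Φ A B n).2 t ≤ s⁻¹ * min B (c⁻¹ * (mixedIter Φ A B n).1 t) :=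
    fun t => by
      rw [le_inv_mul_iff₀ hs0, le_min_iff, le_inv_mul_iff₀ hc0]
      exact ⟨by nlinarith [(hv.2 t).1, (hv.2 t).2, h.pos], by linarith [hn t]⟩
  calc φ s * φ c * (mixedIter Φ A B (n + 1)).2 t
      = φ s * (φ c * Φ (mixedIter Φ A B n).2 (mixedIter Φ A B n).1 t) := mul_assoc _ _ _
    _ ≤ φ s * Φ (fun z => max A (c * (mixedIter Φ A B n).2 z))
          (fun z => min B (c⁻¹ * (mixedIter Φ A B n).1 z)) t :=
        mul_le_mul_of_nonneg_left hcv (hs0.trans (hφ.lt_phi s hs hs1)).le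
    _ ≤ (mixedIter Φ A B (n + 1)).1 t := hφ.mul_le_map h hs hs1 hX hY hu hv hsX hsY t

theorem exists_mul_le_mixedIter (hφ : IsPhiConcave Φ φ A B) (h : MixedMonotoneSetup Φ A B)
    {r : ℝ} (hr : r < 1) : ∃ n, ∀ t, r * (mixedIter Φ A B n).2 t ≤ (mixedIter Φ A B n).1 t := by
  set S : Set ℝ := {ρ | ∃ n, ∀ t, ρ * (mixedIter Φ A B n).2 t ≤ (mixedIter Φ A B n).1 t}
  have hB : 0 < B := h.pos.trans_le h.le
  have hv : ∀ n t, 0 < (mixedIter Φ A B n).2 t := fun n t =>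
    h.pos.trans_le ((h.inInterval_mixedIter n).2.2 t).1
  have hdown : ∀ {r r'}, r' ≤ r → r ∈ S → r' ∈ S := fun hr' ⟨n, hn⟩ =>
    ⟨n, fun t => (mul_le_mul_of_nonneg_right hr' (hv n t).le).trans (hn t)⟩
  have hS : A / B ∈ S := ⟨0, fun _ => (div_mul_cancel₀ A hB.ne').le⟩
  have hbdd : BddAbove S := ⟨1, fun _ ⟨n, hn⟩ =>
    (le_div_iff₀ (hv n 0)).mpr ((hn 0).trans (h.fst_le_snd n n 0)) |>.trans_eq
      (div_self (hv n 0).ne')⟩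
  set T := sSup S
  suffices hT : 1 ≤ T by
    obtain ⟨r', hr'S, hrr'⟩ := exists_lt_of_lt_csSup ⟨_, hS⟩ (hr.trans_le hT)
    exact hdown hrr'.le hr'S
  by_contra! hT
  have hTS : A / B ≤ T := le_csSup hbdd hS
  have hT0 : 0 < T := (div_pos h.pos hB).trans_le hTS
  have hφT : T < φ T := hφ.lt_phi T hTS hT
  -- `φ` need not be monotone, so the ratio `s T < T` is improved in two steps, `s` and then `T`
  set s := max (T / φ T) (A / B)
  have hs1 : s < 1 := max_lt ((div_lt_one (hT0.trans hφT)).mpr hφT) (hTS.trans_lt hT)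
  have hsT : s * T ∈ S := by
    obtain ⟨r', hr'S, hr'⟩ := exists_lt_of_lt_csSup ⟨_, hS⟩ (mul_lt_of_lt_one_left hT0 hs1)
    exact hdown hr'.le hr'S
  obtain ⟨n, hn⟩ := hsT
  have hle : φ s * φ T ≤ T :=
    le_csSup hbdd ⟨n + 1, hφ.mul_mul_le_mixedIter_succ h (le_max_right _ _) hs1 hTS hT hn⟩
  have hlt : T < φ s * φ T := by
    calc T = T / φ T * φ T := (div_mul_cancel₀ T (hT0.trans hφT).ne').symm
      _ ≤ s * φ T := mul_le_mul_of_nonneg_right (le_max_left _ _) (hT0.trans hφT).le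
      _ < φ s * φ T := mul_lt_mul_of_pos_right (hφ.lt_phi s (le_max_right _ _) hs1)
          (hT0.trans hφT)
  exact hle.not_gt hlt

theorem exists_snd_sub_fst_lt (hφ : IsPhiConcave Φ φ A B) (h : MixedMonotoneSetup Φ A B)
    {ε : ℝ} (hε : 0 < ε) :
    ∃ n, ∀ t, (mixedIter Φ A B n).2 t - (mixedIter Φ A B n).1 t < ε := by
  have hB : 0 < B := h.pos.trans_le h.le
  obtain ⟨n, hn⟩ := hφ.exists_mul_le_mixedIter h (r := 1 - ε / (2 * B)) (by
    have : 0 < ε / (2 * B) := by positivity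
    linarith)
  refine ⟨n, fun t => ?_⟩
  have hvB := ((h.inInterval_mixedIter n).2.2 t).2
  have hεB : ε / (2 * B) * B = ε / 2 := by field_simp
  nlinarith [hn t, mul_le_mul_of_nonneg_left hvB (by positivity : (0 : ℝ) ≤ ε / (2 * B))]

end IsPhiConcave

theorem stmt_8_general (Φ : (ℝ → ℝ) → (ℝ → ℝ) → (ℝ → ℝ)) (A B : ℝ)
    (hA : 0 < A) (hAB : A < B)
    (hmap : ∀ x y : ℝ → ℝ, InPcirc x → InPcirc y → InPcirc (Φ x y))
    -- (I): u₀ ≤ Φ(u₀, v₀) and Φ(v₀, u₀) ≤ v₀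
    (hI₁ : ∀ t : ℝ, A ≤ Φ (fun _ => A) (fun _ => B) t)
    (hI₂ : ∀ t : ℝ, Φ (fun _ => B) (fun _ => A) t ≤ B)
    -- (II): Φ is mixed monotone on [u₀,v₀] × [u₀,v₀]
    (hII : ∀ x x' y y' : ℝ → ℝ, InInterval A B x → InInterval A B x' →
      InInterval A B y → InInterval A B y' →
      (∀ t, x t ≤ x' t) → (∀ t, y' t ≤ y t) → ∀ t, Φ x y t ≤ Φ x' y' t)
    -- (III): the comparison function φ on [A/B, 1)
    (φ : ℝ → ℝ)
    (hφ : ∀ γ : ℝ, A / B ≤ γ → γ < 1 → φ γ > γ)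
    (hIII : ∀ γ : ℝ, A / B ≤ γ → γ < 1 →
      ∀ x y : ℝ → ℝ, InInterval A B x → InInterval A B y →
        ∀ t, Φ (fun s => γ * x s) (fun s => γ⁻¹ * y s) t ≥ φ γ * Φ x y t) :
    ∃! x : ℝ → ℝ, InInterval A B x ∧ Φ x x = x := by
  have h : MixedMonotoneSetup Φ A B := ⟨hA, hAB.le, hmap, hI₁, hI₂, hII⟩
  have hgap := fun ε (hε : ε > 0) => IsPhiConcave.exists_snd_sub_fst_lt ⟨hφ, hIII⟩ h hε
  obtain ⟨x, hx, hmem⟩ := h.exists_mem_Icc hgap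
  refine ⟨x, ⟨hx, eq_of_mem_Icc_of_gap hgap (h.map_mem_Icc hx hmem) hmem⟩, ?_⟩
  rintro z ⟨hz, hfix⟩
  exact eq_of_mem_Icc_of_gap hgap (h.mem_Icc_of_map_eq hz hfix) hmem

/-- Mixed monotone fixed point theorem on `AP(ℝ)` (Lemma on Φ with
`u₀ = A`, `v₀ = B` positive constants). -/
theorem stmt_8 (Φ : (ℝ → ℝ) → (ℝ → ℝ) → (ℝ → ℝ)) (A B : ℝ)
    (hA : 0 < A) (hAB : A < B)
    (hmap : ∀ x y : ℝ → ℝ, InPcirc x → InPcirc y → InPcirc (Φ x y))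
    -- (I): u₀ ≤ Φ(u₀, v₀) and Φ(v₀, u₀) ≤ v₀
    (hI₁ : ∀ t : ℝ, A ≤ Φ (fun _ => A) (fun _ => B) t)
    (hI₂ : ∀ t : ℝ, Φ (fun _ => B) (fun _ => A) t ≤ B)
    -- (II): Φ is mixed monotone on [u₀,v₀] × [u₀,v₀]
    (hII : ∀ x x' y y' : ℝ → ℝ, InInterval A B x → InInterval A B x' →
      InInterval A B y → InInterval A B y' →
      (∀ t, x t ≤ x' t) → (∀ t, y' t ≤ y t) → ∀ t, Φ x y t ≤ Φ x' y' t)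
    -- (III): the comparison function φ on [A/B, 1)
    (φ : ℝ → ℝ)
    (hφpos : ∀ γ : ℝ, A / B ≤ γ → γ < 1 → 0 < φ γ)
    (hφ : ∀ γ : ℝ, A / B ≤ γ → γ < 1 → φ γ > γ)
    (hIII : ∀ γ : ℝ, A / B ≤ γ → γ < 1 →
      ∀ x y : ℝ → ℝ, InInterval A B x → InInterval A B y →
        ∀ t, Φ (fun s => γ * x s) (fun s => γ⁻¹ * y s) t ≥ φ γ * Φ x y t) :
    ∃! x : ℝ → ℝ, InInterval A B x ∧ Φ x x = x :=
  stmt_8_general Φ A B hA hAB hmap hI₁ hI₂ hII φ hφ hIII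
end

section
/- In the simplified one-argument case: let P° be the interior of the nonnegative cone in AP(ℝ) and Φ : P° → P° a nondecreasing operator such that there exist constants 0 < A < B with A ≤ Φ(A) and Φ(B) ≤ B, and a function φ : [A/B, 1) → (0,∞) with φ(γ) > γ and Φ(γx) ≥ φ(γ)Φ(x) for all x ∈ [A, B] and γ ∈ [A/B, 1). Then Φ has exactly one fixed point in the order interval [A, B]. -/
lemma ap_const (c : ℝ) : AlmostPeriodic (fun _ => c) := by
  intro ε hε
  exact ⟨1, one_pos, fun a => ⟨a, ⟨le_refl a, by linarith⟩, fun t => by simpa using hε⟩⟩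

lemma ap_smul {f : ℝ → ℝ} (hf : AlmostPeriodic f) {c : ℝ} (hc : 0 < c) :
    AlmostPeriodic (fun t => c * f t) := by
  intro ε hε
  obtain ⟨l, hl, H⟩ := hf (ε / c) (by positivity)
  refine ⟨l, hl, fun a => ?_⟩
  obtain ⟨ξ, hξ, hd⟩ := H a
  refine ⟨ξ, hξ, fun t => ?_⟩
  have h1 : |c * f (t + ξ) - c * f t| = c * |f (t + ξ) - f t| := by
    rw [← mul_sub, abs_mul, abs_of_pos hc]
  rw [h1]
  calc c * |f (t + ξ) - f t| < c * (ε / c) := mul_lt_mul_of_pos_left (hd t) hc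
    _ = ε := by field_simp

lemma abs_min_const (a b c : ℝ) : |min a c - min b c| ≤ |a - b| := by
  have h1 := le_abs_self (a - b)
  have h2 := neg_abs_le (a - b)
  rcases le_total a c with h | h <;> rcases le_total b c with h' | h' <;>
    rw [abs_le] <;> constructor <;>
    simp [min_eq_left, min_eq_right, h, h'] <;> linarith

lemma ap_min_const {f : ℝ → ℝ} (hf : AlmostPeriodic f) (c : ℝ) :
    AlmostPeriodic (fun t => min (f t) c) := by
  intro ε hε
  obtain ⟨l, hl, H⟩ := hf ε hε
  refine ⟨l, hl, fun a => ?_⟩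
  obtain ⟨ξ, hξ, hd⟩ := H a
  exact ⟨ξ, hξ, fun t => lt_of_le_of_lt (abs_min_const _ _ _) (hd t)⟩

lemma inPcirc_of_inInterval {A B : ℝ} (hA : 0 < A) {x : ℝ → ℝ}
    (hx : InInterval A B x) : InPcirc x :=
  ⟨hx.1, A, hA, fun t => (hx.2 t).1⟩

lemma inInterval_constA {A B : ℝ} (hAB : A ≤ B) : InInterval A B (fun _ => A) :=
  ⟨ap_const A, fun _ => ⟨le_rfl, hAB⟩⟩

lemma inInterval_constB {A B : ℝ} (hAB : A ≤ B) : InInterval A B (fun _ => B) :=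
  ⟨ap_const B, fun _ => ⟨hAB, le_rfl⟩⟩

lemma phi_preserves (Φ : (ℝ → ℝ) → (ℝ → ℝ)) (A B : ℝ)
    (hA : 0 < A) (hAB : A < B)
    (hmap : ∀ x : ℝ → ℝ, InPcirc x → InPcirc (Φ x))
    (hI₁ : ∀ t : ℝ, A ≤ Φ (fun _ => A) t)
    (hI₂ : ∀ t : ℝ, Φ (fun _ => B) t ≤ B)
    (hmono : ∀ x y : ℝ → ℝ, InInterval A B x → InInterval A B y →
      (∀ t, x t ≤ y t) → ∀ t, Φ x t ≤ Φ y t)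
    {x : ℝ → ℝ} (hx : InInterval A B x) : InInterval A B (Φ x) := by
  refine ⟨(hmap x (inPcirc_of_inInterval hA hx)).1, fun t => ⟨?_, ?_⟩⟩
  · exact le_trans (hI₁ t)
      (hmono _ x (inInterval_constA hAB.le) hx (fun s => (hx.2 s).1) t)
  · exact le_trans
      (hmono x _ hx (inInterval_constB hAB.le) (fun s => (hx.2 s).2) t) (hI₂ t)

lemma push (Φ : (ℝ → ℝ) → (ℝ → ℝ)) (A B : ℝ)
    (hA : 0 < A) (hAB : A < B)
    (hmap : ∀ x : ℝ → ℝ, InPcirc x → InPcirc (Φ x))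
    (hI₁ : ∀ t : ℝ, A ≤ Φ (fun _ => A) t)
    (hI₂ : ∀ t : ℝ, Φ (fun _ => B) t ≤ B)
    (hmono : ∀ x y : ℝ → ℝ, InInterval A B x → InInterval A B y →
      (∀ t, x t ≤ y t) → ∀ t, Φ x t ≤ Φ y t)
    (φ : ℝ → ℝ)
    (hφpos : ∀ γ : ℝ, A / B ≤ γ → γ < 1 → 0 < φ γ)
    (hφ : ∀ γ : ℝ, A / B ≤ γ → γ < 1 → φ γ > γ)
    (hscal : ∀ γ : ℝ, A / B ≤ γ → γ < 1 → ∀ x : ℝ → ℝ, InInterval A B x →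
      ∀ t, Φ (fun s => γ * x s) t ≥ φ γ * Φ x t)
    (x y : ℝ → ℝ) (hx : InInterval A B x) (hy : InInterval A B y)
    (a b : ℝ) (haAB : A / B ≤ a) (hab : a ≤ b) (hb1 : b < 1)
    (hay : ∀ s, a * y s ≤ x s) :
    ∀ s, a / b * φ b * Φ y s ≤ Φ x s := by
  have hB : 0 < B := hA.trans hAB
  have ha0 : 0 < a := lt_of_lt_of_le (by positivity) haAB
  have hb0 : 0 < b := ha0.trans_le hab
  have ha1 : a < 1 := lt_of_le_of_lt hab hb1
  have habB : A / B ≤ b := haAB.trans hab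
  have hAbB : A ≤ b * B := by
    rw [div_le_iff₀ hB] at habB; linarith [habB]
  have hAaB : A ≤ a * B := by
    rw [div_le_iff₀ hB] at haAB; linarith [haAB]
  -- the auxiliary function z = min (x/a) B
  set z : ℝ → ℝ := fun s => min (x s / a) B with hzdef
  have hzx : ∀ s, x s ≤ x s / a := by
    intro s
    rw [le_div_iff₀ ha0]
    nlinarith [(hx.2 s).1]
  have hz : InInterval A B z := by
    constructor
    · have : AlmostPeriodic (fun t => a⁻¹ * x t) := ap_smul hx.1 (by positivity)
      have h2 := ap_min_const this B
      simpa [hzdef, inv_mul_eq_div] using h2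
    · intro s
      exact ⟨le_min (le_trans (hx.2 s).1 (hzx s)) hAB.le, min_le_right _ _⟩
  have hyz : ∀ s, y s ≤ z s := by
    intro s
    refine le_min ?_ (hy.2 s).2
    rw [le_div_iff₀ ha0]
    calc y s * a = a * y s := mul_comm _ _
      _ ≤ x s := hay s
  have haz : InInterval A B (fun s => a * z s) := by
    constructor
    · exact ap_smul hz.1 ha0
    · intro s
      constructor
      · have : a * z s = min (x s) (a * B) := by
          rw [hzdef]
          rw [mul_min_of_nonneg _ _ ha0.le, mul_div_cancel₀ _ ha0.ne']
        show A ≤ a * z s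
        rw [this]
        exact le_min (hx.2 s).1 hAaB
      · show a * z s ≤ B
        calc a * z s ≤ 1 * z s := by nlinarith [(hz.2 s).1]
          _ = z s := one_mul _
          _ ≤ B := (hz.2 s).2
  have hazx : ∀ s, a * z s ≤ x s := by
    intro s
    calc a * z s ≤ a * (x s / a) := by
          have := min_le_left (x s / a) B
          nlinarith [this]
    _ = x s := by field_simp
  have hΦz := phi_preserves Φ A B hA hAB hmap hI₁ hI₂ hmono hz
  have hΦzy : ∀ s, Φ y s ≤ Φ z s := hmono y z hy hz hyz
  have hmono_az : ∀ s, Φ (fun s => a * z s) s ≤ Φ x s := hmono _ x haz hx hazx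
  rcases eq_or_lt_of_le hab with heq | hlt
  · -- single stage: a = b
    subst heq
    intro s
    have h1 := hscal a haAB ha1 z hz s
    have h2 : a / a * φ a = φ a := by field_simp
    rw [h2]
    calc φ a * Φ y s ≤ φ a * Φ z s :=
          mul_le_mul_of_nonneg_left (hΦzy s) (hφpos a haAB ha1).le
      _ ≤ Φ (fun s => a * z s) s := h1
      _ ≤ Φ x s := hmono_az s
  · -- double stage: a < b
    have hbz : InInterval A B (fun s => b * z s) := by
      constructor
      · exact ap_smul hz.1 hb0
      · intro s
        constructor
        · have : b * z s = min (b * (x s / a)) (b * B) := by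
            rw [hzdef, mul_min_of_nonneg _ _ hb0.le]
          show A ≤ b * z s
          rw [this]
          refine le_min ?_ hAbB
          calc A ≤ x s := (hx.2 s).1
            _ ≤ b * (x s / a) := by
                have hx0 : 0 ≤ x s := le_trans hA.le (hx.2 s).1
                have hxa : a * (x s / a) = x s := by field_simp
                linarith [hxa, mul_le_mul_of_nonneg_right hab (div_nonneg hx0 ha0.le)]
        · show b * z s ≤ B
          calc b * z s ≤ 1 * z s := by nlinarith [(hz.2 s).1]
            _ = z s := one_mul _
            _ ≤ B := (hz.2 s).2
    have habab : A / B ≤ a / b := le_trans haAB (by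
      rw [le_div_iff₀ hb0]; nlinarith)
    have hab1 : a / b < 1 := (div_lt_one hb0).mpr hlt
    intro s
    have key1 := hscal (a / b) habab hab1 (fun s => b * z s) hbz s
    have key2 := hscal b habB hb1 z hz s
    have hfe : (fun s' => a / b * (b * z s')) = (fun s' => a * z s') := by
      funext s'; field_simp
    rw [hfe] at key1
    have hΦz0 : 0 ≤ Φ z s := le_trans hA.le (hΦz.2 s).1
    have hφb0 : 0 < φ b := hφpos b habB hb1
    have hφab : a / b ≤ φ (a / b) := (hφ (a / b) habab hab1).le
    have hφab0 : 0 < φ (a / b) := hφpos (a / b) habab hab1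
    calc a / b * φ b * Φ y s ≤ a / b * φ b * Φ z s := by
          have := hΦzy s
          have h0 : 0 ≤ a / b * φ b := by positivity
          nlinarith
      _ ≤ φ (a / b) * (φ b * Φ z s) := by nlinarith [mul_nonneg hφb0.le hΦz0]
      _ ≤ φ (a / b) * Φ (fun s' => b * z s') s := by nlinarith
      _ ≤ Φ (fun s' => a * z s') s := key1
      _ ≤ Φ x s := hmono_az s


/-- One-argument monotone fixed point theorem on `AP(ℝ)`. -/
theorem stmt_9 (Φ : (ℝ → ℝ) → (ℝ → ℝ)) (A B : ℝ)
    (hA : 0 < A) (hAB : A < B)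
    (hmap : ∀ x : ℝ → ℝ, InPcirc x → InPcirc (Φ x))
    (hI₁ : ∀ t : ℝ, A ≤ Φ (fun _ => A) t)
    (hI₂ : ∀ t : ℝ, Φ (fun _ => B) t ≤ B)
    (hmono : ∀ x y : ℝ → ℝ, InInterval A B x → InInterval A B y →
      (∀ t, x t ≤ y t) → ∀ t, Φ x t ≤ Φ y t)
    (φ : ℝ → ℝ)
    (hφpos : ∀ γ : ℝ, A / B ≤ γ → γ < 1 → 0 < φ γ)
    (hφ : ∀ γ : ℝ, A / B ≤ γ → γ < 1 → φ γ > γ)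
    (hscal : ∀ γ : ℝ, A / B ≤ γ → γ < 1 → ∀ x : ℝ → ℝ, InInterval A B x →
      ∀ t, Φ (fun s => γ * x s) t ≥ φ γ * Φ x t) :
    ∃! x : ℝ → ℝ, InInterval A B x ∧ Φ x = x := by
  have hB : 0 < B := hA.trans hAB
  have hABlt : A / B < 1 := (div_lt_one hB).mpr hAB
  have hAB0 : 0 < A / B := by positivity
  have hpres := fun {w} (hw : InInterval A B w) =>
    phi_preserves Φ A B hA hAB hmap hI₁ hI₂ hmono hw
  -- the iteration sequences
  set u : ℕ → ℝ → ℝ := fun n => Φ^[n] (fun _ => A) with hudef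
  set v : ℕ → ℝ → ℝ := fun n => Φ^[n] (fun _ => B) with hvdef
  have husucc : ∀ n, u (n + 1) = Φ (u n) := fun n => Function.iterate_succ_apply' Φ n _
  have hvsucc : ∀ n, v (n + 1) = Φ (v n) := fun n => Function.iterate_succ_apply' Φ n _
  have hu0 : u 0 = fun _ => A := rfl
  have hv0 : v 0 = fun _ => B := rfl
  have hInt : ∀ n, InInterval A B (u n) ∧ InInterval A B (v n) := by
    intro n
    induction n with
    | zero => exact ⟨inInterval_constA hAB.le, inInterval_constB hAB.le⟩
    | succ k ih =>
      rw [husucc, hvsucc]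
      exact ⟨hpres ih.1, hpres ih.2⟩
  have huv : ∀ n s, u n s ≤ v n s := by
    intro n
    induction n with
    | zero => exact fun s => hAB.le
    | succ k ih =>
      rw [husucc, hvsucc]
      exact hmono _ _ (hInt k).1 (hInt k).2 ih
  have humono : ∀ n s, u n s ≤ u (n + 1) s := by
    intro n
    induction n with
    | zero => intro s; rw [husucc]; exact hI₁ s
    | succ k ih =>
      intro s
      simpa only [husucc] using hmono (u k) (u (k+1)) (hInt k).1 (hInt (k+1)).1 ih s
  have hvmono : ∀ n s, v (n + 1) s ≤ v n s := by
    intro n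
    induction n with
    | zero => intro s; rw [hvsucc]; exact hI₂ s
    | succ k ih =>
      intro s
      simpa only [hvsucc] using hmono (v (k+1)) (v k) (hInt (k+1)).2 (hInt k).2 ih s
  have humono' : ∀ s, Monotone fun n => u n s :=
    fun s => monotone_nat_of_le_succ (fun n => humono n s)
  have hvmono' : ∀ s, Antitone fun n => v n s :=
    fun s => antitone_nat_of_succ_le (fun n => hvmono n s)
  have huvall : ∀ m n s, u m s ≤ v n s := by
    intro m n s
    calc u m s ≤ u (max m n) s := humono' s (le_max_left m n)
      _ ≤ v (max m n) s := huv _ s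
      _ ≤ v n s := hvmono' s (le_max_right m n)
  -- the comparison coefficients
  set S : ℕ → Set ℝ := fun n => {c | c ∈ Set.Icc (A / B) 1 ∧ ∀ s, c * v n s ≤ u n s}
    with hSdef
  have hSmem : ∀ n, A / B ∈ S n := by
    intro n
    refine ⟨⟨le_rfl, hABlt.le⟩, fun s => ?_⟩
    have h1 : A / B * v n s ≤ A / B * B :=
      mul_le_mul_of_nonneg_left ((hInt n).2.2 s).2 hAB0.le
    have h2 : A / B * B = A := by field_simp
    calc A / B * v n s ≤ A := by rw [h2] at h1; exact h1
      _ ≤ u n s := ((hInt n).1.2 s).1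
  have hSbdd : ∀ n, BddAbove (S n) := fun n => ⟨1, fun c hc => hc.1.2⟩
  set t : ℕ → ℝ := fun n => sSup (S n) with htdef
  have htA : ∀ n, A / B ≤ t n := fun n => le_csSup (hSbdd n) (hSmem n)
  have ht1 : ∀ n, t n ≤ 1 := fun n => csSup_le ⟨_, hSmem n⟩ (fun c hc => hc.1.2)
  have ht0 : ∀ n, 0 < t n := fun n => lt_of_lt_of_le hAB0 (htA n)
  have htv : ∀ n s, t n * v n s ≤ u n s := by
    intro n s
    have hv0 : 0 < v n s := lt_of_lt_of_le hA ((hInt n).2.2 s).1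
    have : t n ≤ u n s / v n s :=
      csSup_le ⟨_, hSmem n⟩ (fun c hc => (le_div_iff₀ hv0).mpr (hc.2 s))
    exact (le_div_iff₀ hv0).mp this
  have hSsub : ∀ n, S n ⊆ S (n + 1) := by
    intro n c hc
    refine ⟨hc.1, fun s => ?_⟩
    have hc0 : 0 ≤ c := le_trans hAB0.le hc.1.1
    calc c * v (n+1) s ≤ c * v n s := mul_le_mul_of_nonneg_left (hvmono n s) hc0
      _ ≤ u n s := hc.2 s
      _ ≤ u (n+1) s := humono n s
  have htmono : Monotone t :=
    monotone_nat_of_le_succ (fun n => csSup_le_csSup (hSbdd (n+1)) ⟨_, hSmem n⟩ (hSsub n))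
  set T : ℝ := ⨆ n, t n with hTdef
  have htbdd : BddAbove (Set.range t) := ⟨1, by rintro c ⟨n, rfl⟩; exact ht1 n⟩
  have htT : ∀ n, t n ≤ T := fun n => le_ciSup htbdd n
  have hT1 : T ≤ 1 := ciSup_le ht1
  have hTA : A / B ≤ T := le_trans (htA 0) (htT 0)
  have hT0 : 0 < T := lt_of_lt_of_le hAB0 hTA
  have htlim : Filter.Tendsto t Filter.atTop (nhds T) := tendsto_atTop_ciSup htmono htbdd
  -- T = 1
  have hTeq : T = 1 := by
    by_contra hne
    have hTlt : T < 1 := lt_of_le_of_ne hT1 hne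
    have hφT := hφ T hTA hTlt
    have key : ∀ n, min (t n / T * φ T) 1 ∈ S (n + 1) := by
      intro n
      have hpush := push Φ A B hA hAB hmap hI₁ hI₂ hmono φ hφpos hφ hscal
        (u n) (v n) (hInt n).1 (hInt n).2 (t n) T (htA n) (htT n) hTlt (htv n)
      rw [← husucc, ← hvsucc] at hpush
      have hmin1 : A / B ≤ min (t n / T * φ T) 1 := by
        refine le_min ?_ hABlt.le
        have h1 : t n / T * T ≤ t n / T * φ T :=
          mul_le_mul_of_nonneg_left hφT.le (div_nonneg (ht0 n).le hT0.le)
        have h2 : t n / T * T = t n := by field_simp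
        calc A / B ≤ t n := htA n
          _ = t n / T * T := h2.symm
          _ ≤ t n / T * φ T := h1
      refine ⟨⟨hmin1, min_le_right _ _⟩, fun s => ?_⟩
      have hv0 : 0 ≤ v (n+1) s := le_trans hA.le ((hInt (n+1)).2.2 s).1
      calc min (t n / T * φ T) 1 * v (n+1) s ≤ t n / T * φ T * v (n+1) s :=
            mul_le_mul_of_nonneg_right (min_le_left _ _) hv0
        _ ≤ u (n+1) s := hpush s
    have hstep : ∀ n, min (t n / T * φ T) 1 ≤ t (n + 1) :=
      fun n => le_csSup (hSbdd (n+1)) (key n)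
    have hl1 : Filter.Tendsto (fun n => t (n + 1)) Filter.atTop (nhds T) :=
      htlim.comp (Filter.tendsto_add_atTop_nat 1)
    have hl2 : Filter.Tendsto (fun n => min (t n / T * φ T) 1) Filter.atTop
        (nhds (min (φ T) 1)) := by
      have h1 : Filter.Tendsto (fun n => t n / T * φ T) Filter.atTop
          (nhds (T / T * φ T)) := (htlim.div_const T).mul_const (φ T)
      have h2 : T / T * φ T = φ T := by field_simp
      rw [h2] at h1
      exact h1.min tendsto_const_nhds
    have hfin : min (φ T) 1 ≤ T := le_of_tendsto_of_tendsto' hl2 hl1 hstep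
    have : T < min (φ T) 1 := lt_min hφT hTlt
    linarith
  -- the gap estimate
  have hgap : ∀ n s, v n s - u n s ≤ (1 - t n) * B := by
    intro n s
    have h1 := htv n s
    have h2 := ((hInt n).2.2 s).2
    have h3 := ht1 n
    nlinarith
  have hgap0 : Filter.Tendsto (fun n => (1 - t n) * B) Filter.atTop (nhds 0) := by
    have h1 : Filter.Tendsto (fun n => (1 - t n) * B) Filter.atTop
        (nhds ((1 - T) * B)) := ((tendsto_const_nhds.sub htlim).mul_const B)
    rwa [hTeq, sub_self, zero_mul] at h1
  -- the limit function
  set x : ℝ → ℝ := fun s => ⨆ n, u n s with hxdef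
  have hubdd : ∀ s, BddAbove (Set.range fun n => u n s) :=
    fun s => ⟨B, by rintro c ⟨n, rfl⟩; exact ((hInt n).1.2 s).2⟩
  have hux : ∀ n s, u n s ≤ x s := fun n s => le_ciSup (hubdd s) n
  have hxv : ∀ n s, x s ≤ v n s :=
    fun n s => ciSup_le (fun m => huvall m n s)
  have hxA : ∀ s, A ≤ x s := fun s => le_trans ((hInt 0).1.2 s).1 (hux 0 s)
  have hxB : ∀ s, x s ≤ B := fun s => le_trans (hxv 0 s) ((hInt 0).2.2 s).2
  have hxgap : ∀ n s, |x s - u n s| ≤ (1 - t n) * B := by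
    intro n s
    rw [abs_le]
    constructor
    · have h1 : 0 ≤ x s - u n s := by linarith [hux n s]
      have h2 : 0 ≤ (1 - t n) * B := mul_nonneg (by linarith [ht1 n]) hB.le
      linarith
    · linarith [hxv n s, hgap n s]
  have hxAP : AlmostPeriodic x := by
    intro ε hε
    obtain ⟨n, hn⟩ := (hgap0.eventually (gt_mem_nhds (by positivity : (0:ℝ) < ε/3))).exists
    obtain ⟨l, hl, H⟩ := (hInt n).1.1 (ε/3) (by positivity)
    refine ⟨l, hl, fun a => ?_⟩
    obtain ⟨ξ, hξ, hd⟩ := H a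
    refine ⟨ξ, hξ, fun s => ?_⟩
    have h1 := hxgap n (s + ξ)
    have h2 := hxgap n s
    have h3 := hd s
    calc |x (s + ξ) - x s|
        = |(x (s + ξ) - u n (s + ξ)) + (u n (s + ξ) - u n s) + (u n s - x s)| := by
          ring_nf
      _ ≤ |x (s + ξ) - u n (s + ξ)| + |u n (s + ξ) - u n s| + |u n s - x s| :=
          abs_add_three _ _ _
      _ < ε := by
          rw [abs_sub_comm (u n s) (x s)]
          linarith
  have hxInt : InInterval A B x := ⟨hxAP, fun s => ⟨hxA s, hxB s⟩⟩
  have hfix : Φ x = x := by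
    funext s
    have h1 : ∀ n, u (n+1) s ≤ Φ x s := by
      intro n
      have := hmono (u n) x (hInt n).1 hxInt (fun s' => hux n s') s
      rwa [← husucc] at this
    have h2 : ∀ n, Φ x s ≤ v (n+1) s := by
      intro n
      have := hmono x (v n) hxInt (hInt n).2 (fun s' => hxv n s') s
      rwa [← hvsucc] at this
    have habs : ∀ n, |Φ x s - x s| ≤ (1 - t (n+1)) * B := by
      intro n
      rw [abs_le]
      constructor
      · linarith [h1 n, hxv (n+1) s, hgap (n+1) s]
      · linarith [h2 n, hux (n+1) s, hgap (n+1) s]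
    have hl : Filter.Tendsto (fun n => (1 - t (n+1)) * B) Filter.atTop (nhds 0) :=
      hgap0.comp (Filter.tendsto_add_atTop_nat 1)
    have : |Φ x s - x s| ≤ 0 := ge_of_tendsto hl (Filter.Eventually.of_forall habs)
    have := abs_nonneg (Φ x s - x s)
    have : Φ x s - x s = 0 := by
      have := abs_eq_zero.mp (le_antisymm ‹|Φ x s - x s| ≤ 0› (abs_nonneg _))
      exact this
    linarith
  -- uniqueness
  have huniq : ∀ p q : ℝ → ℝ, InInterval A B p → InInterval A B q →
      Φ p = p → Φ q = q → ∀ s, q s ≤ p s := by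
    intro p q hp hq hfp hfq s
    set C : Set ℝ := {c | c ∈ Set.Icc (A / B) 1 ∧ ∀ s', c * q s' ≤ p s'} with hCdef
    have hCmem : A / B ∈ C := by
      refine ⟨⟨le_rfl, hABlt.le⟩, fun s' => ?_⟩
      have h1 : A / B * q s' ≤ A / B * B := mul_le_mul_of_nonneg_left ((hq.2 s').2) hAB0.le
      have h2 : A / B * B = A := by field_simp
      calc A / B * q s' ≤ A := by rw [h2] at h1; exact h1
        _ ≤ p s' := (hp.2 s').1
    have hCbdd : BddAbove C := ⟨1, fun c hc => hc.1.2⟩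
    set c : ℝ := sSup C with hcdef
    have hcA : A / B ≤ c := le_csSup hCbdd hCmem
    have hc1 : c ≤ 1 := csSup_le ⟨_, hCmem⟩ (fun e he => he.1.2)
    have hcq : ∀ s', c * q s' ≤ p s' := by
      intro s'
      have hq0 : 0 < q s' := lt_of_lt_of_le hA (hq.2 s').1
      have : c ≤ p s' / q s' :=
        csSup_le ⟨_, hCmem⟩ (fun e he => (le_div_iff₀ hq0).mpr (he.2 s'))
      exact (le_div_iff₀ hq0).mp this
    have hceq : c = 1 := by
      by_contra hne
      have hclt : c < 1 := lt_of_le_of_ne hc1 hne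
      have hpush := push Φ A B hA hAB hmap hI₁ hI₂ hmono φ hφpos hφ hscal
        p q hp hq c c hcA le_rfl hclt hcq
      rw [hfp, hfq] at hpush
      have hc0 : c ≠ 0 := (lt_of_lt_of_le hAB0 hcA).ne'
      have hcc : c / c * φ c = φ c := by
        rw [div_self hc0, one_mul]
      rw [hcc] at hpush
      have hφc := hφ c hcA hclt
      have hmem : min (φ c) 1 ∈ C := by
        refine ⟨⟨le_min (le_trans hcA hφc.le) hABlt.le, min_le_right _ _⟩, fun s' => ?_⟩
        have hq0 : 0 ≤ q s' := le_trans hA.le (hq.2 s').1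
        calc min (φ c) 1 * q s' ≤ φ c * q s' :=
              mul_le_mul_of_nonneg_right (min_le_left _ _) hq0
          _ ≤ p s' := hpush s'
      have := le_csSup hCbdd hmem
      have : c < min (φ c) 1 := lt_min hφc hclt
      linarith [le_csSup hCbdd hmem]
    have := hcq s
    rw [hceq, one_mul] at this
    exact this
  refine ⟨x, ⟨hxInt, hfix⟩, ?_⟩
  rintro y ⟨hyInt, hyfix⟩
  funext s
  exact le_antisymm (huniq x y hxInt hyInt hfix hyfix s) (huniq y x hyInt hxInt hyfix hfix s)
end

section
/- Let m, n be positive reals with m > 1, n ≥ m, and let A > 0 with A^n > (m-1)/(n-m+1). For γ ∈ [c, 1) with 0 < c, define φ(γ) = γ^m (1+A^n)/(1+γ^n A^n). If additionally c ≥ ((m-1)(1+A^n)/(n A^n))^(1/(n-m+1)), then φ(γ) > γ for all γ ∈ [c, 1). Equivalently, γ^(m-1)(1+A^n) > 1 + γ^n A^n on [c, 1). -/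
/-!
With `B = A ^ n`, the gap `F x = (1 + B) x ^ (m - 1) - B x ^ n` satisfies `F 1 = 1` and
`F' x = x ^ (m - 2) ((m - 1)(1 + B) - n B x ^ (n - m + 1))`. The lower bound on `c` is exactly
the condition making the bracket negative for `x > c`, so `F` is strictly decreasing on
`[c, 1]` and hence `F γ > 1` for `γ ∈ [c, 1)`.
-/

open Set

namespace Real

theorem hasDerivAt_mul_rpow_sub_mul_rpow (a b k n : ℝ) {x : ℝ} (hx : 0 < x) :
    HasDerivAt (fun y => a * y ^ k - b * y ^ n)
      (a * (k * x ^ (k - 1)) - b * (n * x ^ (n - 1))) x :=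
  ((hasDerivAt_rpow_const (Or.inl hx.ne')).const_mul a).sub
    ((hasDerivAt_rpow_const (Or.inl hx.ne')).const_mul b)

theorem strictAntiOn_mul_rpow_sub_mul_rpow {a b k n s : ℝ} (hkn : k < n) (hnb : 0 < n * b)
    (hs : 0 < s) (hthreshold : k * a ≤ n * b * s ^ (n - k)) :
    StrictAntiOn (fun y => a * y ^ k - b * y ^ n) (Ici s) := by
  refine strictAntiOn_of_deriv_neg (convex_Ici s) (fun x hx => ?_) fun x hx => ?_
  · exact (hasDerivAt_mul_rpow_sub_mul_rpow a b k n (hs.trans_le hx)).continuousAt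
      |>.continuousWithinAt
  rw [interior_Ici] at hx
  have hx0 : 0 < x := hs.trans hx
  rw [(hasDerivAt_mul_rpow_sub_mul_rpow a b k n hx0).deriv]
  have hgrow : k * a < n * b * x ^ (n - k) :=
    hthreshold.trans_lt <| mul_lt_mul_of_pos_left
      (rpow_lt_rpow hs.le hx (sub_pos.mpr hkn)) hnb
  have hsplit : x ^ (n - 1) = x ^ (n - k) * x ^ (k - 1) := by
    rw [← rpow_add hx0]; ring_nf
  have hxk : 0 < x ^ (k - 1) := rpow_pos_of_pos hx0 _
  rw [hsplit]
  nlinarith [mul_lt_mul_of_pos_right hgrow hxk]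

end Real

open Real

theorem stmt_12_general (m n A c : ℝ) (hm : 1 < m) (hnm : m ≤ n) (hA : 0 < A)
    (hc : 0 < c)
    (hc' : c ≥ ((m - 1) * (1 + A ^ n) / (n * A ^ n)) ^ (1 / (n - m + 1))) :
    ∀ γ : ℝ, c ≤ γ → γ < 1 →
      γ ^ m * (1 + A ^ n) / (1 + γ ^ n * A ^ n) > γ ∧
        γ ^ (m - 1) * (1 + A ^ n) > 1 + γ ^ n * A ^ n := by
  intro γ hcγ hγ1
  have hγ : 0 < γ := hc.trans_le hcγ
  have hB : 0 < A ^ n := rpow_pos_of_pos hA n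
  have hnB : 0 < n * A ^ n := mul_pos (by linarith) hB
  have hthreshold : (m - 1) * (1 + A ^ n) ≤ n * A ^ n * c ^ (n - (m - 1)) := by
    rw [one_div, ge_iff_le, rpow_inv_le_iff_of_pos (by positivity) hc.le (by linarith),
      div_le_iff₀' hnB] at hc'
    rwa [sub_sub_eq_add_sub, add_sub_right_comm]
  have hgap := strictAntiOn_mul_rpow_sub_mul_rpow (a := 1 + A ^ n) (by linarith) hnB hc
    hthreshold hcγ (hcγ.trans hγ1.le) hγ1
  simp only [one_rpow, mul_one] at hgap
  have hkey : γ ^ (m - 1) * (1 + A ^ n) > 1 + γ ^ n * A ^ n := by linarith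
  refine ⟨?_, hkey⟩
  have hγm : γ ^ m = γ * γ ^ (m - 1) := by
    rw [mul_comm, ← rpow_add_one hγ.ne', sub_add_cancel]
  rw [gt_iff_lt, lt_div_iff₀ (by positivity), hγm]
  nlinarith [mul_lt_mul_of_pos_left hkey hγ]

theorem stmt_12 (m n A c : ℝ) (hm : 1 < m) (hnm : m ≤ n) (hA : 0 < A)
    (hAn : A ^ n > (m - 1) / (n - m + 1)) (hc : 0 < c)
    (hc' : c ≥ ((m - 1) * (1 + A ^ n) / (n * A ^ n)) ^ (1 / (n - m + 1))) :
    ∀ γ : ℝ, c ≤ γ → γ < 1 →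
      γ ^ m * (1 + A ^ n) / (1 + γ ^ n * A ^ n) > γ ∧
        γ ^ (m - 1) * (1 + A ^ n) > 1 + γ ^ n * A ^ n :=
  stmt_12_general m n A c hm hnm hA hc hc'
end

section
/- With h the truncation of f(u) = u^m/(1+u^n) at V = (m/(n-m))^(1/n) (n > m > 1), A, B as in the theorem with A ≤ V ≤ B, and φ(γ) = γ^m(1+A^n)/(1+γ^n A^n): for every x ∈ [A, B] and γ ∈ [A/B, 1), h(γx)/h(x) ≥ φ(γ) if x ≤ V/γ, and h(γx)/h(x) ≥ 1 if x > V/γ. Consequently h(γx) ≥ min{φ(γ),1} · h(x). -/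
/-!
Write `f u = u ^ m / (1 + u ^ n)`, so that `h x = f (min x V)`. Weighted AM-GM gives
`n s ^ m ≤ (n - m) + m s ^ n`, i.e. `(m / (n - m)) (s ^ m - s ^ n) ≤ 1 - s ^ m`, and this is
exactly `f (s V) ≤ f V` for every `s ≥ 0` and, when `s ≤ 1` and `b ≤ V`, `f (s b) ≤ f b`:
`f` is maximal at `V` and increasing on `(0, V]`.

For `z = min x V ≥ A`, cross-multiplying reduces `φ γ f z ≤ f (γ z)` to
`(z ^ n - A ^ n) (1 - γ ^ n) ≥ 0`; if `γ x ≤ V` then `f (γ z) ≤ f (γ x) = h (γ x)` by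
monotonicity, and if `γ x > V` then `h (γ x) = f V ≥ h x`.
-/

open Real Set

noncomputable def powRatio (m n u : ℝ) : ℝ := u ^ m / (1 + u ^ n)

lemma powRatio_pos {m n u : ℝ} (hu : 0 < u) : 0 < powRatio m n u := by
  unfold powRatio; positivity

/-- Weighted AM-GM for the weights `1 - m / n`, `m / n` and the points `1`, `t ^ n`. -/
lemma mul_rpow_le_sub_add_mul_rpow {m n t : ℝ} (hm : 0 ≤ m) (hmn : m ≤ n) (ht : 0 ≤ t) :
    n * t ^ m ≤ (n - m) + m * t ^ n := by
  rcases hm.eq_or_lt with rfl | hm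
  · simp
  have hn : 0 < n := hm.trans_le hmn
  have hamgm := geom_mean_le_arith_mean2_weighted (sub_nonneg.2 ((div_le_one hn).2 hmn))
    (div_nonneg hm.le hn.le) zero_le_one (rpow_nonneg ht n) (sub_add_cancel 1 (m / n))
  rw [one_rpow, one_mul, ← rpow_mul ht, mul_div_cancel₀ m hn.ne'] at hamgm
  have := mul_le_mul_of_nonneg_left hamgm hn.le
  field_simp at this
  linarith

lemma div_sub_mul_rpow_sub_le_one_sub_rpow {m n s : ℝ} (hm : 0 ≤ m) (hmn : m < n) (hs : 0 ≤ s) :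
    m / (n - m) * (s ^ m - s ^ n) ≤ 1 - s ^ m := by
  have hnm : 0 < n - m := sub_pos.2 hmn
  rw [div_mul_eq_mul_div, div_le_iff₀ hnm]
  nlinarith [mul_rpow_le_sub_add_mul_rpow hm hmn.le hs]

lemma powRatio_mul_le {m n b s : ℝ} (hb : 0 < b) (hs : 0 ≤ s)
    (h : b ^ n * (s ^ m - s ^ n) ≤ 1 - s ^ m) : powRatio m n (s * b) ≤ powRatio m n b := by
  unfold powRatio
  rw [mul_rpow hs hb.le, mul_rpow hs hb.le, div_le_div_iff₀ (by positivity) (by positivity)]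
  nlinarith [mul_le_mul_of_nonneg_left h (rpow_pos_of_pos hb m).le]

lemma powRatio_le_of_rpow_eq {m n V y : ℝ} (hm : 0 ≤ m) (hmn : m < n) (hV : 0 < V)
    (hVn : V ^ n = m / (n - m)) (hy : 0 ≤ y) : powRatio m n y ≤ powRatio m n V := by
  have hs : 0 ≤ y / V := div_nonneg hy hV.le
  rw [← div_mul_cancel₀ y hV.ne']
  exact powRatio_mul_le hV hs (hVn ▸ div_sub_mul_rpow_sub_le_one_sub_rpow hm hmn hs)

lemma powRatio_monotoneOn {m n V : ℝ} (hm : 0 ≤ m) (hmn : m < n)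
    (hVn : V ^ n = m / (n - m)) : MonotoneOn (powRatio m n) (Ioc 0 V) := by
  rintro a ⟨ha, -⟩ b ⟨hb, hbV⟩ hab
  have hs : 0 ≤ a / b := div_nonneg ha.le hb.le
  have hs1 : a / b ≤ 1 := (div_le_one hb).2 hab
  have hsn : (a / b) ^ n ≤ (a / b) ^ m := rpow_le_rpow_of_exponent_ge' hs hs1 hm hmn.le
  have hbn : b ^ n ≤ m / (n - m) := hVn ▸ rpow_le_rpow hb.le hbV (hm.trans hmn.le)
  rw [← div_mul_cancel₀ a hb.ne']
  refine powRatio_mul_le hb hs ?_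
  calc b ^ n * ((a / b) ^ m - (a / b) ^ n)
      ≤ m / (n - m) * ((a / b) ^ m - (a / b) ^ n) :=
        mul_le_mul_of_nonneg_right hbn (sub_nonneg.2 hsn)
    _ ≤ 1 - (a / b) ^ m := div_sub_mul_rpow_sub_le_one_sub_rpow hm hmn hs

lemma mul_powRatio_le_powRatio_mul {m n A y γ : ℝ} (hn : 0 ≤ n) (hA : 0 < A) (hAy : A ≤ y)
    (hγ : 0 ≤ γ) (hγ1 : γ ≤ 1) :
    γ ^ m * (1 + A ^ n) / (1 + γ ^ n * A ^ n) * powRatio m n y ≤ powRatio m n (γ * y) := by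
  have hy : 0 < y := hA.trans_le hAy
  have hAyn : A ^ n ≤ y ^ n := rpow_le_rpow hA.le hAy hn
  have hγn : γ ^ n ≤ 1 := rpow_le_one hγ hγ1 hn
  have hγm : 0 ≤ γ ^ m := rpow_nonneg hγ m
  have hym : 0 < y ^ m := rpow_pos_of_pos hy m
  unfold powRatio
  rw [mul_rpow hγ hy.le, mul_rpow hγ hy.le, div_mul_div_comm,
    div_le_div_iff₀ (by positivity) (by positivity)]
  nlinarith [mul_nonneg (mul_nonneg hγm hym.le)
    (mul_nonneg (sub_nonneg.2 hAyn) (sub_nonneg.2 hγn))]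

theorem stmt_14 (m n V A B : ℝ) (h φ : ℝ → ℝ) (hm : 1 < m) (hmn : m < n)
    (hV : V = (m / (n - m)) ^ (1 / n))
    (hA : 0 < A) (hAV : A ≤ V) (hVB : V ≤ B)
    (hh : ∀ x : ℝ, 0 < x →
      h x = if x ≤ V then x ^ m / (1 + x ^ n) else V ^ m / (1 + V ^ n))
    (hφ : ∀ γ : ℝ, φ γ = γ ^ m * (1 + A ^ n) / (1 + γ ^ n * A ^ n)) :
    ∀ x γ : ℝ, A ≤ x → x ≤ B → A / B ≤ γ → γ < 1 →
      ((x ≤ V / γ → h (γ * x) / h x ≥ φ γ) ∧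
       (x > V / γ → h (γ * x) / h x ≥ 1)) ∧
      h (γ * x) ≥ min (φ γ) 1 * h x := by
  intro x γ hAx _ hγB hγ1
  have hm0 : 0 ≤ m := by linarith
  have hV0 : 0 < V := hA.trans_le hAV
  have hVn : V ^ n = m / (n - m) := by
    rw [hV, ← rpow_mul (div_pos (by linarith) (by linarith)).le, one_div,
      inv_mul_cancel₀ (by linarith), rpow_one]
  have hγ : 0 < γ := (div_pos hA (hV0.trans_le hVB)).trans_le hγB
  have hx : 0 < x := hA.trans_le hAx
  have h_eq : ∀ y, 0 < y → h y = powRatio m n (min y V) := fun y hy ↦ by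
    rw [hh y hy]; split_ifs with hyV
    · rw [min_eq_left hyV]; rfl
    · rw [min_eq_right (not_le.1 hyV).le]; rfl
  have hz : A ≤ min x V := le_min hAx hAV
  have hhx : 0 < h x := h_eq x hx ▸ powRatio_pos (hA.trans_le hz)
  have h_small : x ≤ V / γ → φ γ * h x ≤ h (γ * x) := fun hxV ↦ by
    have hγx : γ * x ≤ V := by rwa [le_div_iff₀' hγ] at hxV
    rw [h_eq _ (mul_pos hγ hx), min_eq_left hγx, h_eq x hx, hφ]
    refine (mul_powRatio_le_powRatio_mul (by linarith) hA hz hγ.le hγ1.le).trans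
      (powRatio_monotoneOn hm0 hmn hVn ⟨mul_pos hγ (hA.trans_le hz), ?_⟩ ⟨mul_pos hγ hx, hγx⟩ ?_)
    · exact (mul_le_mul_of_nonneg_left (min_le_left x V) hγ.le).trans hγx
    · exact mul_le_mul_of_nonneg_left (min_le_left x V) hγ.le
  have h_large : V / γ < x → h x ≤ h (γ * x) := fun hxV ↦ by
    have hγx : V ≤ γ * x := by rw [div_lt_iff₀' hγ] at hxV; exact hxV.le
    rw [h_eq _ (mul_pos hγ hx), min_eq_right hγx, h_eq x hx]
    exact powRatio_le_of_rpow_eq hm0 hmn hV0 hVn (hA.trans_le hz).le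
  refine ⟨⟨fun hxV ↦ (le_div_iff₀ hhx).2 (h_small hxV),
    fun hxV ↦ (le_div_iff₀ hhx).2 ((one_mul _).trans_le (h_large hxV))⟩, ?_⟩
  rcases le_or_gt x (V / γ) with hxV | hxV
  · exact (mul_le_mul_of_nonneg_right (min_le_left _ _) hhx.le).trans (h_small hxV)
  · exact (mul_le_mul_of_nonneg_right (min_le_right _ _) hhx.le).trans
      ((one_mul _).trans_le (h_large hxV))
end
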